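/- Let k be a positive semidefinite kernel on a set X, let λ > 0, and let x_1, …, x_t ∈ X be chosen by maximum-variance sampling: for each s = 1,…,t, σ_{s−1}(x_s) ≥ σ_{s−1}(x) for every x ∈ X, where σ_s²(x) = k(x,x) − k_s(x)ᵀ(K_s + λI_s)⁻¹ k_s(x) is the posterior variance after the first s points (σ_0²(x) = k(x,x)). Then for every x ∈ X, t · σ_t²(x) ≤ Σ_{s=1}^t σ²_{s−1}(x_s). -/

import Mathlib

/-!
Conditioning on more points can only decrease the posterior variance: writing
`b ⬝ᵥ A⁻¹ b = max_w (2 w ⬝ᵥ b - w ⬝ᵥ A w)` for positive definite `A`, the regularized Gram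
matrix of the first `s` points is a principal submatrix of that of the first `t ≥ s`
points, and padding the optimal weights with zeros shows the maximum can only grow.
Hence `σ²_t(y) ≤ σ²_s(y) ≤ σ²_s(x_s)` for every `s < t`, and summing over `s` gives the bound.
-/

open Matrix

/-- Gram matrix of the first `s` points `x 0, …, x (s-1)` under the kernel `k`. -/
noncomputable def gramMatrix {X : Type*} (k : X → X → ℝ) (x : ℕ → X) (s : ℕ) :
    Matrix (Fin s) (Fin s) ℝ :=
  Matrix.of fun i j => k (x i) (x j)

/-- Gaussian-process posterior variance at `y` after conditioning on the first `s`
points `x 0, …, x (s-1)`, with regularization `λ`: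
`σ_s²(y) = k(y,y) − k_s(y)ᵀ (K_s + λ I_s)⁻¹ k_s(y)` (and `σ_0²(y) = k(y,y)`). -/
noncomputable def postVar {X : Type*} (k : X → X → ℝ) (x : ℕ → X) (lam : ℝ)
    (s : ℕ) (y : X) : ℝ :=
  k y y - (fun i : Fin s => k (x i) y) ⬝ᵥ
    ((gramMatrix k x s + lam • (1 : Matrix (Fin s) (Fin s) ℝ))⁻¹ *ᵥ
      fun i : Fin s => k (x i) y)

namespace Matrix

variable {m n : Type*} [Fintype m] [Fintype n] [DecidableEq m] [DecidableEq n]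

theorem PosDef.two_mul_dotProduct_sub_le_dotProduct_inv_mulVec {A : Matrix n n ℝ}
    (hA : A.PosDef) (b w : n → ℝ) :
    2 * (w ⬝ᵥ b) - w ⬝ᵥ (A *ᵥ w) ≤ b ⬝ᵥ (A⁻¹ *ᵥ b) := by
  set u := A⁻¹ *ᵥ b
  have hAu : A *ᵥ u = b := by
    rw [mulVec_mulVec, mul_nonsing_inv _ ((isUnit_iff_isUnit_det A).mp hA.isUnit), one_mulVec]
  have hAw : u ⬝ᵥ (A *ᵥ w) = w ⬝ᵥ b := by
    rw [dotProduct_mulVec, ← mulVec_transpose, (isHermitian_iff_isSymm.mp hA.isHermitian).eq,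
      hAu, dotProduct_comm]
  have hsq := hA.posSemidef.dotProduct_mulVec_nonneg (w - u)
  simp only [star_trivial, mulVec_sub, dotProduct_sub, sub_dotProduct, hAu, hAw] at hsq
  rw [dotProduct_comm b]
  linarith

theorem PosDef.dotProduct_inv_mulVec_conj_le {A : Matrix n n ℝ} (hA : A.PosDef)
    (P : Matrix m n ℝ) (hPAP : IsUnit (P * A * Pᵀ)) (b : n → ℝ) :
    (P *ᵥ b) ⬝ᵥ ((P * A * Pᵀ)⁻¹ *ᵥ (P *ᵥ b)) ≤ b ⬝ᵥ (A⁻¹ *ᵥ b) := by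
  set c := P *ᵥ b
  set u := (P * A * Pᵀ)⁻¹ *ᵥ c
  have hBu : (P * A * Pᵀ) *ᵥ u = c := by
    rw [mulVec_mulVec, mul_nonsing_inv _ ((isUnit_iff_isUnit_det _).mp hPAP), one_mulVec]
  have hwb (v : n → ℝ) : (Pᵀ *ᵥ u) ⬝ᵥ v = u ⬝ᵥ (P *ᵥ v) := by
    rw [mulVec_transpose, dotProduct_mulVec]
  have key := hA.two_mul_dotProduct_sub_le_dotProduct_inv_mulVec b (Pᵀ *ᵥ u)
  rw [hwb, hwb, mulVec_mulVec, mulVec_mulVec, hBu] at key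
  rw [dotProduct_comm]
  linarith

theorem PosDef.dotProduct_inv_mulVec_submatrix_le {A : Matrix n n ℝ} (hA : A.PosDef)
    {e : m → n} (he : Function.Injective e) (b : n → ℝ) :
    (b ∘ e) ⬝ᵥ ((A.submatrix e e)⁻¹ *ᵥ (b ∘ e)) ≤ b ⬝ᵥ (A⁻¹ *ᵥ b) := by
  set P : Matrix m n ℝ := (1 : Matrix n n ℝ).submatrix e id
  have hPb : P *ᵥ b = b ∘ e := by
    ext i; simp [P, mulVec, dotProduct, one_apply]
  have hPAP : P * A * Pᵀ = A.submatrix e e := by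
    ext i j; simp [P, mul_apply, one_apply]
  have := hA.dotProduct_inv_mulVec_conj_le P (hPAP ▸ (hA.submatrix he).isUnit) b
  rwa [hPb, hPAP] at this

end Matrix

section PosteriorVariance

variable {X : Type*} (k : X → X → ℝ) (x : ℕ → X) (lam : ℝ)

theorem gramMatrix_add_smul_one_eq_submatrix {s t : ℕ} (hst : s ≤ t) :
    gramMatrix k x s + lam • (1 : Matrix (Fin s) (Fin s) ℝ) =
      (gramMatrix k x t + lam • (1 : Matrix (Fin t) (Fin t) ℝ)).submatrix
        (Fin.castLE hst) (Fin.castLE hst) := by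
  simp only [submatrix_add, submatrix_smul, Pi.add_apply, Pi.smul_apply,
    submatrix_one _ (Fin.castLE_injective hst)]
  rfl

theorem posDef_gramMatrix_add_smul_one
    (hpsd : ∀ (n : ℕ) (v : Fin n → X),
      (Matrix.of fun i j => k (v i) (v j) : Matrix (Fin n) (Fin n) ℝ).PosSemidef)
    (hlam : 0 < lam) (s : ℕ) :
    (gramMatrix k x s + lam • (1 : Matrix (Fin s) (Fin s) ℝ)).PosDef :=
  (PosDef.one.smul hlam).posSemidef_add (hpsd s fun i => x i)

theorem postVar_antitone
    (hpsd : ∀ (n : ℕ) (v : Fin n → X),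
      (Matrix.of fun i j => k (v i) (v j) : Matrix (Fin n) (Fin n) ℝ).PosSemidef)
    (hlam : 0 < lam) (y : X) : Antitone fun s => postVar k x lam s y := by
  intro s t hst
  have := (posDef_gramMatrix_add_smul_one k x lam hpsd hlam t).dotProduct_inv_mulVec_submatrix_le
    (Fin.castLE_injective hst) fun i : Fin t => k (x i) y
  rw [← gramMatrix_add_smul_one_eq_submatrix] at this
  exact sub_le_sub_left this _

end PosteriorVariance

/-- If the points `x_1, …, x_t` are chosen by maximum-variance
sampling (`σ²_{s−1}(x_s) ≥ σ²_{s−1}(y)` for every `y` and every `s ≤ t`; equivalent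
to `σ_{s−1}(x_s) ≥ σ_{s−1}(y)` since posterior standard deviations are nonnegative),
then for every `y`, `t · σ_t²(y) ≤ Σ_{s=1}^t σ²_{s−1}(x_s)`. -/
theorem max_variance_sampling_final_variance_bound
    {X : Type*} (k : X → X → ℝ)
    (hpsd : ∀ (n : ℕ) (v : Fin n → X),
      (Matrix.of fun i j => k (v i) (v j) : Matrix (Fin n) (Fin n) ℝ).PosSemidef)
    (x : ℕ → X) (t : ℕ) (lam : ℝ) (hlam : 0 < lam)
    (hmaxvar : ∀ s < t, ∀ y : X, postVar k x lam s y ≤ postVar k x lam s (x s)) :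
    ∀ y : X, (t : ℝ) * postVar k x lam t y ≤
      ∑ s ∈ Finset.range t, postVar k x lam s (x s) := by
  intro y
  calc (t : ℝ) * postVar k x lam t y = ∑ _s ∈ Finset.range t, postVar k x lam t y := by simp
    _ ≤ ∑ s ∈ Finset.range t, postVar k x lam s (x s) := Finset.sum_le_sum fun s hs =>
      (postVar_antitone k x lam hpsd hlam y (Finset.mem_range.mp hs).le).trans
        (hmaxvar s (Finset.mem_range.mp hs) y)
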